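/- arXiv:math/0303385 — 4 statements merged into one kernel-verified Lean document; each statement's English description precedes it below -/
import Mathlib

section
/- Let S = (β, γ) be a standard symbol. Then the recursive construction of ψ succeeds: the sets γ^l (l ≥ 0) are pairwise disjoint and their union is all of γ, the resulting map ψ : γ → β is a well-defined injection into β, and ψ(j) ≤ j for every j ∈ γ. -/
namespace LM2003

open scoped BigOperators

/-- `(β, γ)` is a symbol in `Sy(n,k,r)`: two finite sets of integers contained in
`{1, …, n+1}`, of cardinalities `k+r` and `k` (rows are identified with the subsets
they enumerate; strict increase is automatic). -/
def IsSymbol (n k r : ℕ) (β γ : Finset ℤ) : Prop :=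
  β ⊆ Finset.Icc 1 ((n : ℤ) + 1) ∧ γ ⊆ Finset.Icc 1 ((n : ℤ) + 1) ∧
    β.card = k + r ∧ γ.card = k

/-- `(β,γ)` is standard: for each `i < |γ|`, the `i`-th smallest element of `β`
is `≤` the `i`-th smallest element of `γ`. -/
def IsStandard (β γ : Finset ℤ) : Prop :=
  ∀ i : ℕ, i < γ.card → (β.sort (· ≤ ·))[i]! ≤ (γ.sort (· ≤ ·))[i]!

/-- Accumulated data after level `l` of the recursive definition of `ψ`:
the first component is `γ⁰ ∪ ⋯ ∪ γ^l` and the second is `ψ(γ⁰ ∪ ⋯ ∪ γ^l)`. -/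
def psiAcc (β γ : Finset ℤ) : ℕ → Finset ℤ × Finset ℤ
  | 0 => (γ ∩ β, γ ∩ β)
  | l + 1 =>
    let p := psiAcc β γ l
    let g := (γ \ p.1).filter fun j => j - ((l : ℤ) + 1) ∈ β \ p.2
    (p.1 ∪ g, p.2 ∪ g.image fun j => j - ((l : ℤ) + 1))

/-- The level sets `γ^l` in the recursive definition of `ψ`. -/
def gammaL (β γ : Finset ℤ) : ℕ → Finset ℤ
  | 0 => γ ∩ β
  | l + 1 =>
    (γ \ (psiAcc β γ l).1).filter fun j => j - ((l : ℤ) + 1) ∈ β \ (psiAcc β γ l).2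

open Classical in
/-- The map `ψ` : for `j ∈ γ^l` it is `j ↦ j - l` (via the least such `l`),
and the identity elsewhere. -/
noncomputable def psiS (β γ : Finset ℤ) (j : ℤ) : ℤ :=
  if h : ∃ l, j ∈ gammaL β γ l then j - (Nat.find h : ℤ) else j

/-- The pairs of a (standard) symbol: the pairs `(j, ψ(j))` with `j ∈ γ` and `ψ(j) ≠ j`. -/
noncomputable def pairsS (β γ : Finset ℤ) : Finset (ℤ × ℤ) :=
  (γ.filter fun j => psiS β γ j ≠ j).image fun j => (j, psiS β γ j)

/-- Exchanging, for every pair in `T`, the two members between the two rows of `(β,γ)`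
(reordering of rows is automatic for sets). Pairs are written `(j, ψ j)` with `j` in the
bottom row `γ` and `ψ j` in the top row `β`. -/
def swapSymbol (β γ : Finset ℤ) (T : Finset (ℤ × ℤ)) : Finset ℤ × Finset ℤ :=
  ((β \ T.image Prod.snd) ∪ T.image Prod.fst,
   (γ \ T.image Prod.fst) ∪ T.image Prod.snd)

/-- The class `C(S)` of a standard symbol: all symbols obtained by permuting a subset
of its pairs. -/
noncomputable def CSet (β γ : Finset ℤ) : Finset (Finset ℤ × Finset ℤ) :=
  (pairsS β γ).powerset.image (swapSymbol β γ)

/-- The Fock space `F(Λ)`: free `ℚ(v)`-module on the set of all symbols. -/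
abbrev FF : Type := (Finset ℤ × Finset ℤ) →₀ RatFunc ℚ

/-- Standard basis vector `u_S`. -/
noncomputable def uS (S : Finset ℤ × Finset ℤ) : FF := Finsupp.single S 1

/-- The variable `v` of `K = ℚ(v)`. -/
noncomputable def vv : RatFunc ℚ := RatFunc.X

/-- Action of the Chevalley generator `f_j` on the standard basis vector `u_S`. -/
noncomputable def fAct (j : ℤ) (S : Finset ℤ × Finset ℤ) : FF :=
  (if j ∈ S.2 ∧ j + 1 ∉ S.2 then uS (S.1, insert (j + 1) (S.2.erase j)) else 0) +
  (if j ∈ S.1 ∧ j + 1 ∉ S.1 then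
      vv ^ ((if j ∈ S.2 then (1 : ℤ) else 0) - (if j + 1 ∈ S.2 then (1 : ℤ) else 0)) •
        uS (insert (j + 1) (S.1.erase j), S.2)
    else 0)

/-- The Chevalley generator `f_j` as a linear operator on `F`. -/
noncomputable def fLin (j : ℤ) : FF →ₗ[RatFunc ℚ] FF :=
  Finsupp.lsum (RatFunc ℚ) fun S => LinearMap.toSpanSingleton (RatFunc ℚ) FF (fAct j S)

/-- Divided powers: `f_j^{(1)} = f_j`, `f_j^{(2)} = f_j² / (v + v⁻¹)`. -/
noncomputable def fDiv (j : ℤ) (m : ℕ) : FF →ₗ[RatFunc ℚ] FF :=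
  if m = 2 then (vv + vv⁻¹)⁻¹ • (fLin j ∘ₗ fLin j) else fLin j

/-- `b_S = Σ_{Σ ∈ C(S)} v^{n(Σ)} u_Σ`, written as a sum over the subsets `T` of the
set of pairs of `S` (with `n(Σ) = |T|`). -/
noncomputable def bS (β γ : Finset ℤ) : FF :=
  ∑ T ∈ (pairsS β γ).powerset, vv ^ T.card • uS (swapSymbol β γ T)

/-- `ι` is an involution of the finite set `Z`. -/
def IsInvolutionOn (Z : Finset ℤ) (ι : ℤ → ℤ) : Prop :=
  (∀ z ∈ Z, ι z ∈ Z) ∧ ∀ z ∈ Z, ι (ι z) = z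

/-- `z < z'` are consecutive elements of `Z`. -/
def ConsecutiveIn (Z : Finset ℤ) (z z' : ℤ) : Prop :=
  z ∈ Z ∧ z' ∈ Z ∧ z < z' ∧ ∀ x ∈ Z, ¬(z < x ∧ x < z')

/-- `r`-admissible involutions of a finite set `Z` of integers: `ι` is an involution of
`Z` with exactly `r` fixed points, and either `|Z| = r`, or there are two consecutive
elements `z < z'` of `Z` with `ι z = z'` whose removal again yields an `r`-admissible
involution. -/
inductive IsAdmissible (r : ℕ) : Finset ℤ → (ℤ → ℤ) → Prop
  | base (Z : Finset ℤ) (ι : ℤ → ℤ) (hinv : IsInvolutionOn Z ι)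
      (hfix : (Z.filter fun z => ι z = z).card = r) (hcard : Z.card = r) :
      IsAdmissible r Z ι
  | step (Z : Finset ℤ) (ι : ℤ → ℤ) (z z' : ℤ) (hinv : IsInvolutionOn Z ι)
      (hfix : (Z.filter fun w => ι w = w).card = r)
      (hcons : ConsecutiveIn Z z z') (hzz : ι z = z')
      (hrec : IsAdmissible r (Z \ {z, z'}) ι) :
      IsAdmissible r Z ι

/-- `c_j(S)`: number of occurrences of `j` among the entries of the symbol `(β,γ)`. -/
def contentS (β γ : Finset ℤ) (j : ℤ) : ℕ :=
  (if j ∈ β then 1 else 0) + (if j ∈ γ then 1 else 0)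

/-!
`ψ` is a greedy matching of `γ` into `β`: at step `l` every still unmatched `j ∈ γ` is sent
to `j - l` if that element of `β` is still free. Disjointness of the `γ^l`, injectivity of `ψ`
and `ψ(j) ≤ j` are built into the recursion; the content is that after `n` steps nothing is
left unmatched. This is a Hall-type count. Standardness says that for every `x` at least as
many elements of `β` as of `γ` lie below `x`. An element `j` unmatched after `n` steps would
have seen every element of `β` in `[j - n, j]`, hence every element of `β` below `j`, taken.
Pushing the threshold `x ≥ j` up past matched elements whose image lies below it, one
reaches an `x` such that all of `β ∩ (-∞, x]` is the image of matched elements of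
`γ ∩ (-∞, x]`, a set that misses `j`; this contradicts the count.
-/

open Finset

lemma psiAcc_fst_succ (β γ : Finset ℤ) (l : ℕ) :
    (psiAcc β γ (l + 1)).1 = (psiAcc β γ l).1 ∪ gammaL β γ (l + 1) := rfl

lemma psiAcc_snd_succ (β γ : Finset ℤ) (l : ℕ) :
    (psiAcc β γ (l + 1)).2 =
      (psiAcc β γ l).2 ∪ (gammaL β γ (l + 1)).image (· - ((l : ℤ) + 1)) := rfl

section Recursion

variable {β γ : Finset ℤ} {l : ℕ} {j : ℤ}

lemma mem_gammaL_zero : j ∈ gammaL β γ 0 ↔ j ∈ γ ∧ j ∈ β := mem_inter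

lemma mem_gammaL_succ :
    j ∈ gammaL β γ (l + 1) ↔ j ∈ γ ∧ j ∉ (psiAcc β γ l).1 ∧
      j - ((l : ℤ) + 1) ∈ β ∧ j - ((l : ℤ) + 1) ∉ (psiAcc β γ l).2 := by
  simp only [gammaL, mem_filter, mem_sdiff, and_assoc]

lemma gammaL_subset (β γ : Finset ℤ) (l : ℕ) : gammaL β γ l ⊆ γ := by
  cases l with
  | zero => exact inter_subset_left
  | succ l => exact fun j hj => (mem_gammaL_succ.mp hj).1

lemma mem_psiAcc_fst_iff : j ∈ (psiAcc β γ l).1 ↔ ∃ i ≤ l, j ∈ gammaL β γ i := by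
  induction l with
  | zero => simp [psiAcc, gammaL]
  | succ l ih =>
    rw [psiAcc_fst_succ, mem_union, ih]
    constructor
    · rintro (⟨i, hi, hj⟩ | hj)
      exacts [⟨i, by omega, hj⟩, ⟨l + 1, le_rfl, hj⟩]
    · rintro ⟨i, hi, hj⟩
      rcases Nat.lt_or_eq_of_le hi with hi | rfl
      exacts [Or.inl ⟨i, by omega, hj⟩, Or.inr hj]

lemma psiAcc_fst_subset (β γ : Finset ℤ) (l : ℕ) : (psiAcc β γ l).1 ⊆ γ := fun _ hj =>
  let ⟨i, _, hi⟩ := mem_psiAcc_fst_iff.mp hj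
  gammaL_subset β γ i hi

lemma disjoint_gammaL_of_lt {i m : ℕ} (h : i < m) :
    Disjoint (gammaL β γ i) (gammaL β γ m) := by
  obtain ⟨l, rfl⟩ : ∃ l, m = l + 1 := ⟨m - 1, by omega⟩
  refine disjoint_left.mpr fun j hi hm => (mem_gammaL_succ.mp hm).2.1 ?_
  exact mem_psiAcc_fst_iff.mpr ⟨i, by omega, hi⟩

lemma psiS_eq_of_mem_gammaL (hj : j ∈ gammaL β γ l) : psiS β γ j = j - l := by
  classical
  have h : ∃ i, j ∈ gammaL β γ i := ⟨l, hj⟩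
  have hfind : Nat.find h = l := (Nat.find_eq_iff h).mpr
    ⟨hj, fun i hil hi => disjoint_left.mp (disjoint_gammaL_of_lt hil) hi hj⟩
  rw [psiS, dif_pos h, hfind]

lemma psiS_mem_of_mem_gammaL (hj : j ∈ gammaL β γ l) : psiS β γ j ∈ β := by
  rw [psiS_eq_of_mem_gammaL hj]
  cases l with
  | zero => simpa using (mem_gammaL_zero.mp hj).2
  | succ l => simpa using (mem_gammaL_succ.mp hj).2.2.1

lemma psiAcc_snd_eq_image (β γ : Finset ℤ) (l : ℕ) :
    (psiAcc β γ l).2 = (psiAcc β γ l).1.image (psiS β γ) := by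
  induction l with
  | zero =>
    refine ((image_congr (g := id) fun j hj => ?_).trans image_id).symm
    simpa using psiS_eq_of_mem_gammaL (l := 0) hj
  | succ l ih =>
    rw [psiAcc_snd_succ, psiAcc_fst_succ, image_union, ih]
    congr 1
    exact image_congr fun j hj => by simpa using (psiS_eq_of_mem_gammaL hj).symm

lemma injOn_psiS_psiAcc_fst (β γ : Finset ℤ) (l : ℕ) :
    Set.InjOn (psiS β γ) (psiAcc β γ l).1 := by
  induction l with
  | zero =>
    intro a ha b hb hab
    simpa [psiS_eq_of_mem_gammaL (l := 0) ha, psiS_eq_of_mem_gammaL (l := 0) hb] using hab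
  | succ l ih =>
    have hdisj : Disjoint ((psiAcc β γ l).1 : Set ℤ) (gammaL β γ (l + 1)) :=
      Finset.disjoint_coe.mpr (disjoint_right.mpr fun j hj => (mem_gammaL_succ.mp hj).2.1)
    rw [psiAcc_fst_succ, coe_union, Set.injOn_union hdisj]
    refine ⟨ih, fun a ha b hb hab => ?_, fun a ha b hb hab => ?_⟩
    · simpa [psiS_eq_of_mem_gammaL ha, psiS_eq_of_mem_gammaL hb] using hab
    · have hused : psiS β γ a ∈ (psiAcc β γ l).2 := by
        rw [psiAcc_snd_eq_image]; exact mem_image_of_mem _ ha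
      refine (mem_gammaL_succ.mp hb).2.2.2 ?_
      simpa [hab, psiS_eq_of_mem_gammaL hb] using hused

lemma mem_psiAcc_snd_of_notMem_fst (hj : j ∈ γ) (hjl : j ∉ (psiAcc β γ l).1) {u : ℤ}
    (hu : u ∈ β) (hlo : j - l ≤ u) (hhi : u ≤ j) : u ∈ (psiAcc β γ l).2 := by
  induction l with
  | zero =>
    obtain rfl : u = j := by push_cast at hlo; omega
    exact absurd (mem_inter.mpr ⟨hj, hu⟩) hjl
  | succ l ih =>
    rw [psiAcc_fst_succ, mem_union, not_or] at hjl
    rw [psiAcc_snd_succ]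
    refine mem_union_left _ ?_
    rcases le_or_gt (j - l) u with h | h
    · exact ih hjl.1 h
    · obtain rfl : u = j - ((l : ℤ) + 1) := by push_cast at hlo; omega
      by_contra hfree
      exact hjl.2 (mem_gammaL_succ.mpr ⟨hj, hjl.1, hu, hfree⟩)

lemma mem_psiAcc_snd_of_mem_fst (hj : j ∈ (psiAcc β γ l).1) {u : ℤ}
    (hu : u ∈ β) (hlo : psiS β γ j ≤ u) (hhi : u ≤ j) : u ∈ (psiAcc β γ l).2 := by
  induction l with
  | zero =>
    obtain rfl : u = j := by simp [psiS_eq_of_mem_gammaL (l := 0) hj] at hlo; omega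
    exact hj
  | succ l ih =>
    rw [psiAcc_fst_succ, mem_union] at hj
    rw [psiAcc_snd_succ, mem_union]
    rcases hj with hj | hj
    · exact Or.inl (ih hj)
    rw [psiS_eq_of_mem_gammaL hj] at hlo
    rcases hlo.eq_or_lt with rfl | hlt
    · exact Or.inr (mem_image_of_mem _ (by simpa using hj))
    · exact Or.inl (mem_psiAcc_snd_of_notMem_fst (gammaL_subset β γ _ hj)
        (mem_gammaL_succ.mp hj).2.1 hu (by push_cast at hlt; omega) hhi)

end Recursion

lemma lt_card_filter_le_iff {α : Type*} [LinearOrder α] (s : Finset α) (i : Fin s.card)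
    (x : α) :
    i < #{y ∈ s | y ≤ x} ↔ s.orderEmbOfFin rfl i ≤ x := by
  set e := s.orderEmbOfFin rfl
  have he : ∀ y ∈ s, ∃ m, e m = y := fun y hy => by
    rw [← mem_coe, ← s.range_orderEmbOfFin rfl] at hy
    exact hy
  constructor
  · intro hi
    by_contra! hx
    have hsub : {y ∈ s | y ≤ x} ⊆ (Iio i).image e := fun y hy => by
      obtain ⟨hys, hyx⟩ := mem_filter.mp hy
      obtain ⟨m, rfl⟩ := he y hys
      exact mem_image_of_mem _ (mem_Iio.mpr (e.lt_iff_lt.mp (hyx.trans_lt hx)))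
    have := (card_le_card hsub).trans card_image_le
    rw [Fin.card_Iio] at this
    omega
  · intro hx
    have hsub : (Iic i).image e ⊆ {y ∈ s | y ≤ x} := fun y hy => by
      obtain ⟨m, hm, rfl⟩ := mem_image.mp hy
      exact mem_filter.mpr
        ⟨s.orderEmbOfFin_mem rfl m, (e.le_iff_le.mpr (mem_Iic.mp hm)).trans hx⟩
    have := card_le_card hsub
    rw [card_image_of_injective _ e.injective, Fin.card_Iic] at this
    omega

lemma sort_getElem!_eq_orderEmbOfFin {α : Type*} [LinearOrder α] [Inhabited α]
    (s : Finset α) (i : Fin s.card) :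
    (s.sort (· ≤ ·))[(i : ℕ)]! = s.orderEmbOfFin rfl i := by
  rw [orderEmbOfFin_apply, getElem!_pos _ _ (by simp)]
  rfl

lemma card_filter_le_le_of_isStandard {β γ : Finset ℤ} (hcard : γ.card ≤ β.card)
    (hstd : IsStandard β γ) (x : ℤ) : #{y ∈ γ | y ≤ x} ≤ #{y ∈ β | y ≤ x} := by
  set t := #{y ∈ γ | y ≤ x}
  have htγ : t ≤ γ.card := card_filter_le _ _
  rcases Nat.eq_zero_or_pos t with ht | ht
  · omega
  -- the `t`-th smallest element of `γ` is `≤ x`, hence so is the `t`-th smallest of `β`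
  have hγ := (lt_card_filter_le_iff γ ⟨t - 1, by omega⟩ x).mp (Nat.sub_lt ht one_pos)
  have hβ : β.orderEmbOfFin rfl ⟨t - 1, by omega⟩ ≤ x := by
    have := hstd (t - 1) (by omega)
    rw [sort_getElem!_eq_orderEmbOfFin β ⟨t - 1, by omega⟩,
      sort_getElem!_eq_orderEmbOfFin γ ⟨t - 1, by omega⟩] at this
    exact this.trans hγ
  have : t - 1 < #{y ∈ β | y ≤ x} := (lt_card_filter_le_iff β _ x).mpr hβ
  omega

section Totality

variable {β γ : Finset ℤ} {l : ℕ}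

lemma exists_gt_forall_le_mem_psiAcc_snd (hcard : γ.card ≤ β.card) (hstd : IsStandard β γ)
    {x : ℤ} (hx : ∀ u ∈ β, u ≤ x → u ∈ (psiAcc β γ l).2)
    {j : ℤ} (hj : j ∈ γ) (hjl : j ∉ (psiAcc β γ l).1) (hjx : j ≤ x) :
    ∃ x' ∈ (psiAcc β γ l).1, x < x' ∧
      ∀ u ∈ β, u ≤ x' → u ∈ (psiAcc β γ l).2 := by
  set M := (psiAcc β γ l).1
  by_cases hex : ∃ a ∈ M, x < a ∧ psiS β γ a ≤ x
  · obtain ⟨a, haM, hxa, hψa⟩ := hex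
    refine ⟨a, haM, hxa, fun u hu hua => ?_⟩
    rcases le_or_gt u x with hux | hxu
    · exact hx u hu hux
    · exact mem_psiAcc_snd_of_mem_fst haM hu (by omega) hua
  push Not at hex
  -- else `β ∩ (-∞, x]` is the image of the matched `A ⊆ γ ∩ (-∞, x]`, and `j ∉ A`
  set A := {a ∈ M | psiS β γ a ≤ x}
  have hA : insert j A ⊆ {y ∈ γ | y ≤ x} := by
    refine insert_subset (mem_filter.mpr ⟨hj, hjx⟩) fun a ha => ?_
    obtain ⟨haM, hψa⟩ := mem_filter.mp ha
    exact mem_filter.mpr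
      ⟨psiAcc_fst_subset β γ l haM, not_lt.mp fun hxa => (hex a haM hxa).not_ge hψa⟩
  have hβA : {u ∈ β | u ≤ x} ⊆ A.image (psiS β γ) := fun u hu => by
    obtain ⟨huβ, hux⟩ := mem_filter.mp hu
    have hused := hx u huβ hux
    rw [psiAcc_snd_eq_image] at hused
    obtain ⟨a, haM, rfl⟩ := mem_image.mp hused
    exact mem_image_of_mem _ (mem_filter.mpr ⟨haM, hux⟩)
  have hjA : j ∉ A := fun h => hjl (mem_filter.mp h).1
  have hinj : Set.InjOn (psiS β γ) A :=
    (injOn_psiS_psiAcc_fst β γ l).mono fun a ha => (mem_filter.mp ha).1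
  have h1 := card_le_card hA
  have h2 := card_le_card hβA
  rw [card_insert_of_notMem hjA] at h1
  rw [card_image_of_injOn hinj] at h2
  have := card_filter_le_le_of_isStandard hcard hstd x
  omega

lemma subset_psiAcc_fst (hcard : γ.card ≤ β.card) (hstd : IsStandard β γ)
    (hspan : ∀ j ∈ γ, ∀ u ∈ β, j - l ≤ u) : γ ⊆ (psiAcc β γ l).1 := by
  classical
  intro j hj
  by_contra hjl
  set T := {x ∈ γ | j ≤ x ∧ ∀ u ∈ β, u ≤ x → u ∈ (psiAcc β γ l).2}
  have hjT : j ∈ T := mem_filter.mpr ⟨hj, le_rfl, fun u hu huj =>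
    mem_psiAcc_snd_of_notMem_fst hj hjl hu (hspan j hj u hu) huj⟩
  obtain ⟨-, hjx, hx⟩ := mem_filter.mp (T.max'_mem ⟨j, hjT⟩)
  obtain ⟨x', hx'M, hxx', hx'⟩ := exists_gt_forall_le_mem_psiAcc_snd hcard hstd hx hj hjl hjx
  have hx'T : x' ∈ T := mem_filter.mpr ⟨psiAcc_fst_subset β γ l hx'M, by omega, hx'⟩
  exact (T.le_max' x' hx'T).not_gt hxx'

end Totality

theorem statement0_general (n k r : ℕ)
    (β γ : Finset ℤ) (hS : IsSymbol n k r β γ) (hstd : IsStandard β γ) :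
    (∀ l m : ℕ, l ≠ m → Disjoint (gammaL β γ l) (gammaL β γ m)) ∧
    ((γ : Set ℤ) = ⋃ l : ℕ, (gammaL β γ l : Set ℤ)) ∧
    (∀ l : ℕ, ∀ j ∈ gammaL β γ l, psiS β γ j = j - (l : ℤ)) ∧
    Set.InjOn (psiS β γ) (γ : Set ℤ) ∧
    (∀ j ∈ γ, psiS β γ j ∈ β ∧ psiS β γ j ≤ j) := by
  obtain ⟨hβ, hγ, hβcard, hγcard⟩ := hS
  have hmatched : γ ⊆ (psiAcc β γ n).1 := subset_psiAcc_fst (by omega) hstd fun j hj u hu => by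
    have := mem_Icc.mp (hβ hu)
    have := mem_Icc.mp (hγ hj)
    omega
  have hlevel : ∀ j ∈ γ, ∃ l, j ∈ gammaL β γ l := fun j hj =>
    let ⟨l, _, hl⟩ := mem_psiAcc_fst_iff.mp (hmatched hj)
    ⟨l, hl⟩
  refine ⟨fun l m hlm => ?_, ?_, fun l j => psiS_eq_of_mem_gammaL,
    (injOn_psiS_psiAcc_fst β γ n).mono (coe_subset.mpr hmatched), fun j hj => ?_⟩
  · rcases hlm.lt_or_gt with h | h
    exacts [disjoint_gammaL_of_lt h, (disjoint_gammaL_of_lt h).symm]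
  · ext j
    simp only [Set.mem_iUnion, mem_coe]
    exact ⟨hlevel j, fun ⟨l, hl⟩ => gammaL_subset β γ l hl⟩
  · obtain ⟨l, hl⟩ := hlevel j hj
    exact ⟨psiS_mem_of_mem_gammaL hl, by rw [psiS_eq_of_mem_gammaL hl]; omega⟩

/-- for a standard symbol the recursive construction of `ψ` succeeds:
the `γ^l` are pairwise disjoint with union `γ`, the resulting map `ψ` (equal to
`j - l` on `γ^l`) is a well-defined injection of `γ` into `β`, and `ψ(j) ≤ j`. -/
theorem statement0 (n k r : ℕ) (hn : 2 ≤ n) (hk : 1 ≤ k) (hkr : k + r ≤ n)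
    (β γ : Finset ℤ) (hS : IsSymbol n k r β γ) (hstd : IsStandard β γ) :
    (∀ l m : ℕ, l ≠ m → Disjoint (gammaL β γ l) (gammaL β γ m)) ∧
    ((γ : Set ℤ) = ⋃ l : ℕ, (gammaL β γ l : Set ℤ)) ∧
    (∀ l : ℕ, ∀ j ∈ gammaL β γ l, psiS β γ j = j - (l : ℤ)) ∧
    Set.InjOn (psiS β γ) (γ : Set ℤ) ∧
    (∀ j ∈ γ, psiS β γ j ∈ β ∧ psiS β γ j ≤ j) :=
  statement0_general n k r β γ hS hstd

end LM2003
end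

section
/- Let D and Z be disjoint finite subsets of {1, …, n+1} with 2|D| + |Z| = 2k + r, and let ι be an r-admissible involution of Z. Define β = D ∪ { z ∈ Z : ι(z) ≥ z } and γ = D ∪ { z′ ∈ Z : ι(z′) < z′ } (so β contains all fixed points of ι and the smaller element of each nontrivial orbit, and γ contains the larger element of each nontrivial orbit). Then |β| = k + r and |γ| = k, the resulting symbol S = (β, γ) ∈ Sy(n,k,r) is standard, and the pairs of S are exactly the nontrivial orbits of ι, i.e. the pairs (z′, ι(z′)) with ι(z′) < z′. -/
namespace LM2003

open scoped BigOperators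

/-!
Removing arcs between consecutive points never creates crossings, so the arcs of an admissible
`ι` are nested: every point strictly under an arc is an endpoint of an arc lying under it.
The bottom row is `D` plus the upper ends of the arcs and the top row is `D` plus the lower
ends and the `r` fixed points, which gives the cardinalities. Sending each upper end `z` to
`ι z < z` injects the bottom row into the top row with decreasing entries, so the symbol is
standard. Finally, by nesting, the level `γ^l` in the construction of `ψ` consists exactly of
the upper ends of the arcs of length `l`: the only way to block such an arc would be a
shorter arc starting at its lower end. Hence `ψ = ι` on upper ends.
-/

open Finset

lemma filter_eq_map_orderEmbOfFin {α : Type*} [LinearOrder α] (s : Finset α) (p : α → Prop)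
    [DecidablePred p] :
    {x ∈ s | p x} =
      ({j | p (s.orderEmbOfFin rfl j)} : Finset (Fin #s)).map
        (s.orderEmbOfFin rfl).toEmbedding := by
  ext x
  simp only [mem_map, mem_filter, mem_univ, true_and, RelEmbedding.coe_toEmbedding]
  constructor
  · rintro ⟨hxs, hpx⟩
    obtain ⟨j, rfl⟩ : x ∈ Set.range (s.orderEmbOfFin rfl) := by rwa [range_orderEmbOfFin]
    exact ⟨j, hpx, rfl⟩
  · rintro ⟨j, hpj, rfl⟩
    exact ⟨orderEmbOfFin_mem _ _ _, hpj⟩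

theorem isStandard_of_injOn {β γ : Finset ℤ} (f : ℤ → ℤ) (hmaps : Set.MapsTo f γ β)
    (hinj : Set.InjOn f γ) (hle : ∀ x ∈ γ, f x ≤ x) : IsStandard β γ := by
  intro i hiγ
  have hiβ : i < #β := hiγ.trans_le (card_le_card_of_injOn f hmaps hinj)
  rw [getElem!_pos _ i (by simpa using hiβ), getElem!_pos _ i (by simpa using hiγ)]
  change β.orderEmbOfFin rfl ⟨i, hiβ⟩ ≤ γ.orderEmbOfFin rfl ⟨i, hiγ⟩
  by_contra! hgb
  -- the `i + 1` entries of `γ` up to `γ_i` would be sent into the `i` entries of `β` below `β_i`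
  have hcard := card_le_card_of_injOn f
    (s := {x ∈ γ | x ≤ γ.orderEmbOfFin rfl ⟨i, hiγ⟩})
    (t := {y ∈ β | y < β.orderEmbOfFin rfl ⟨i, hiβ⟩})
    (fun x hx => by
      obtain ⟨hxγ, hxg⟩ := mem_filter.1 hx
      exact mem_filter.2 ⟨hmaps hxγ, by linarith [hle x hxγ]⟩)
    (hinj.mono fun x hx => (mem_filter.1 hx).1)
  rw [filter_eq_map_orderEmbOfFin γ, filter_eq_map_orderEmbOfFin β, card_map, card_map] at hcard
  simp only [OrderEmbedding.le_iff_le, OrderEmbedding.lt_iff_lt, filter_ge_eq_Iic,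
    filter_gt_eq_Iio, Fin.card_Iic, Fin.card_Iio] at hcard
  omega

def IsNested (Z : Finset ℤ) (ι : ℤ → ℤ) : Prop :=
  ∀ z ∈ Z, ι z < z → ∀ y ∈ Z, ι z < y → y < z → ι y ≠ y ∧ ι z < ι y ∧ ι y < z

namespace IsAdmissible

variable {r : ℕ} {Z : Finset ℤ} {ι : ℤ → ℤ}

lemma isInvolutionOn (h : IsAdmissible r Z ι) : IsInvolutionOn Z ι := by
  cases h <;> assumption

lemma card_filter_fixed (h : IsAdmissible r Z ι) : #{z ∈ Z | ι z = z} = r := by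
  cases h <;> assumption

lemma isNested (h : IsAdmissible r Z ι) : IsNested Z ι := by
  induction h with
  | base Z ι _ hfix hcard =>
    intro z hz hlt
    have hall : {w ∈ Z | ι w = w} = Z := eq_of_subset_of_card_le (filter_subset _ _) (by omega)
    have := filter_eq_self.1 hall z hz
    omega
  | step Z ι a a' hinv _ hcons hιa _ ih =>
    obtain ⟨ha, ha', haa', hgap⟩ := hcons
    have hιa' : ι a' = a := hιa ▸ hinv.2 a ha
    have houtside : ∀ x ∈ Z, x ≠ a → x ≠ a' → x < a ∨ a' < x := fun x hx _ _ => by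
      have := hgap x hx
      omega
    intro z hz hzlt y hy hzy hyz
    have hιz := hinv.1 z hz
    have hιιz := hinv.2 z hz
    obtain rfl | hza := eq_or_ne z a
    · omega
    obtain rfl | hza' := eq_or_ne z a'
    · exact absurd ⟨hιa' ▸ hzy, hyz⟩ (hgap y hy)
    have hιza : ι z ≠ a := fun h => hza' (by rw [← hιιz, h, hιa])
    have hιza' : ι z ≠ a' := fun h => hza (by rw [← hιιz, h, hιa'])
    have := houtside z hz hza hza'
    have := houtside (ι z) hιz hιza hιza'
    obtain rfl | hya := eq_or_ne y a
    · omega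
    obtain rfl | hya' := eq_or_ne y a'
    · omega
    exact ih z (by simp [hz, hza, hza']) hzlt y (by simp [hy, hya, hya']) hzy hyz

end IsAdmissible

lemma IsInvolutionOn.card_filter_le {Z : Finset ℤ} {ι : ℤ → ℤ} (h : IsInvolutionOn Z ι) :
    #{z ∈ Z | z ≤ ι z} = #{z ∈ Z | ι z = z} + #{z ∈ Z | ι z < z} := by
  have hsplit : {z ∈ Z | z ≤ ι z} = {z ∈ Z | ι z = z} ∪ {z ∈ Z | z < ι z} := by
    rw [← filter_or]
    exact filter_congr fun z _ => by omega
  have hswap : #{z ∈ Z | z < ι z} = #{z ∈ Z | ι z < z} :=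
    card_nbij' ι ι (fun z _ => by simp_all [h.1 z, h.2 z]) (fun z _ => by simp_all [h.1 z, h.2 z])
      (fun z hz => h.2 z (mem_filter.1 hz).1) (fun z hz => h.2 z (mem_filter.1 hz).1)
  rw [hsplit, card_union_of_disjoint (disjoint_filter.2 fun z _ h1 h2 => by omega), hswap]

lemma psiS_eq_sub {β γ : Finset ℤ} {j : ℤ} {l : ℕ} (hj : j ∈ gammaL β γ l)
    (huniq : ∀ l', j ∈ gammaL β γ l' → l' = l) : psiS β γ j = j - l := by
  have hex : ∃ l, j ∈ gammaL β γ l := ⟨l, hj⟩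
  rw [psiS, dif_pos hex, huniq _ (Nat.find_spec hex)]

section PairsOfInvolution

variable {D Z : Finset ℤ} {ι : ℤ → ℤ}

local notation "βι" => D ∪ Z.filter fun z => z ≤ ι z
local notation "γι" => D ∪ Z.filter fun z => ι z < z

/-- The arcs of `ι` of length at most `l`, recorded by their upper ends. -/
abbrev shortArcs (Z : Finset ℤ) (ι : ℤ → ℤ) (l : ℕ) : Finset ℤ :=
  {z ∈ Z | ι z < z ∧ z - ι z ≤ l}

lemma rows_inter_eq (hdisj : Disjoint D Z) : γι ∩ βι = D := by
  ext x
  have hxDZ : x ∈ D → x ∉ Z := fun h => disjoint_left.1 hdisj h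
  simp only [mem_inter, mem_union, mem_filter]
  constructor
  · rintro ⟨h1 | h1, h2 | h2⟩ <;> first | exact h1 | exact absurd h1.1 (hxDZ h2) | omega
  · exact fun h => ⟨.inl h, .inl h⟩

lemma nextLevel_eq_arcs (hinv : IsInvolutionOn Z ι) (hdisj : Disjoint D Z) (hnest : IsNested Z ι)
    (l : ℕ) :
    {j ∈ γι \ (D ∪ shortArcs Z ι l) |
        j - ((l : ℤ) + 1) ∈ βι \ (D ∪ (shortArcs Z ι l).image ι)} =
      {z ∈ Z | ι z < z ∧ z - ι z = (l : ℤ) + 1} := by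
  ext j
  simp only [mem_filter, mem_sdiff, mem_union, mem_image, not_or, not_and, not_exists]
  constructor
  · rintro ⟨⟨hjγ, hjD, hjshort⟩, hyβ, hyD, hyim⟩
    obtain ⟨hjZ, hjlt⟩ := hjγ.resolve_left hjD
    obtain ⟨hyZ, hyle⟩ := hyβ.resolve_left hyD
    refine ⟨hjZ, hjlt, ?_⟩
    by_contra hne
    have hlong : ι j < j - ((l : ℤ) + 1) := by
      have := hjshort hjZ hjlt
      omega
    -- `j - (l + 1)` lies under the arc ending at `j`, so it opens a shorter arc
    obtain ⟨hyfix, -, hhi⟩ := hnest j hjZ hjlt _ hyZ hlong (by omega)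
    have hιιy := hinv.2 _ hyZ
    exact hyim (ι (j - ((l : ℤ) + 1))) ⟨hinv.1 _ hyZ, by omega, by omega⟩ hιιy
  · rintro ⟨hjZ, hjlt, hlen⟩
    have hιj : j - ((l : ℤ) + 1) = ι j := by omega
    rw [hιj]
    refine ⟨⟨.inr ⟨hjZ, hjlt⟩, fun h => disjoint_left.1 hdisj h hjZ, fun _ _ => by omega⟩,
      .inr ⟨hinv.1 j hjZ, by rw [hinv.2 j hjZ]; omega⟩,
      fun h => disjoint_left.1 hdisj h (hinv.1 j hjZ), ?_⟩
    rintro x ⟨hxZ, hxlt, hxle⟩ hxj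
    have : x = j := by rw [← hinv.2 x hxZ, hxj, hinv.2 j hjZ]
    omega

lemma isStandard_rows (hinv : IsInvolutionOn Z ι) (hdisj : Disjoint D Z) :
    IsStandard βι γι := by
  have hDZ : ∀ x ∈ D, x ∉ Z := fun x hx => disjoint_left.1 hdisj hx
  refine isStandard_of_injOn (fun x => if x ∈ Z then ι x else x) ?_ ?_ ?_
  · intro x hx
    simp only [coe_union, coe_filter, Set.mem_union, Set.mem_ofPred_eq, mem_coe] at hx ⊢
    rcases hx with hxD | ⟨hxZ, hxlt⟩
    · simp [hDZ x hxD, hxD]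
    · rw [if_pos hxZ, hinv.2 x hxZ]
      exact .inr ⟨hinv.1 x hxZ, hxlt.le⟩
  · intro x _ y _ hxy
    simp only at hxy
    split_ifs at hxy with hx hy hy
    · rw [← hinv.2 x hx, hxy, hinv.2 y hy]
    · exact absurd (hxy ▸ hinv.1 x hx) hy
    · exact absurd (hxy ▸ hinv.1 y hy) hx
    · exact hxy
  · intro x hx
    split_ifs with hxZ
    · exact (mem_filter.1 ((mem_union.1 hx).resolve_left fun h => hDZ x h hxZ)).2.le
    · exact le_rfl

lemma psiAcc_eq (hinv : IsInvolutionOn Z ι) (hdisj : Disjoint D Z) (hnest : IsNested Z ι)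
    (l : ℕ) : psiAcc βι γι l = (D ∪ shortArcs Z ι l, D ∪ (shortArcs Z ι l).image ι) := by
  induction l with
  | zero =>
    have hnone : shortArcs Z ι 0 = ∅ := filter_false_of_mem fun z _ => by omega
    simp only [psiAcc, hnone, image_empty, union_empty, rows_inter_eq hdisj]
  | succ l ih =>
    have hgrow : shortArcs Z ι l ∪ {z ∈ Z | ι z < z ∧ z - ι z = (l : ℤ) + 1} =
        shortArcs Z ι (l + 1) := by
      rw [← filter_or]
      exact filter_congr fun z _ => by push_cast; omega
    have hshift :
        {z ∈ Z | ι z < z ∧ z - ι z = (l : ℤ) + 1}.image (fun j => j - ((l : ℤ) + 1)) =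
        {z ∈ Z | ι z < z ∧ z - ι z = (l : ℤ) + 1}.image ι :=
      image_congr fun z hz => by have := (mem_filter.1 hz).2; omega
    simp only [psiAcc, ih, nextLevel_eq_arcs hinv hdisj hnest l, hshift, union_assoc, ← image_union,
      hgrow]

lemma mem_gammaL_iff (hinv : IsInvolutionOn Z ι) (hdisj : Disjoint D Z) (hnest : IsNested Z ι)
    {x : ℤ} {l : ℕ} :
    x ∈ gammaL βι γι l ↔ x ∈ D ∧ l = 0 ∨ x ∈ Z ∧ ι x < x ∧ x - ι x = l := by
  cases l with
  | zero =>
    rw [gammaL, rows_inter_eq hdisj]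
    constructor
    · exact fun h => .inl ⟨h, rfl⟩
    · rintro (⟨h, -⟩ | ⟨-, h1, h2⟩)
      · exact h
      · omega
  | succ l =>
    rw [gammaL, psiAcc_eq hinv hdisj hnest, nextLevel_eq_arcs hinv hdisj hnest, mem_filter]
    simp

lemma psiS_eq_self_of_mem (hinv : IsInvolutionOn Z ι) (hdisj : Disjoint D Z)
    (hnest : IsNested Z ι) {x : ℤ} (hx : x ∈ D) : psiS βι γι x = x := by
  have hxZ : x ∉ Z := disjoint_left.1 hdisj hx
  rw [psiS_eq_sub (l := 0)] <;> simp_all [mem_gammaL_iff hinv hdisj hnest]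

lemma psiS_eq_of_lt (hinv : IsInvolutionOn Z ι) (hdisj : Disjoint D Z) (hnest : IsNested Z ι)
    {x : ℤ} (hx : x ∈ Z) (hlt : ι x < x) : psiS βι γι x = ι x := by
  have hxD : x ∉ D := disjoint_right.1 hdisj hx
  have hlen : ((x - ι x).toNat : ℤ) = x - ι x := Int.toNat_of_nonneg (by omega)
  rw [psiS_eq_sub (l := (x - ι x).toNat)] <;> simp_all [mem_gammaL_iff hinv hdisj hnest]

lemma pairsS_eq_arcs (hinv : IsInvolutionOn Z ι) (hdisj : Disjoint D Z) (hnest : IsNested Z ι) :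
    pairsS βι γι = {z ∈ Z | ι z < z}.image fun z => (z, ι z) := by
  have hmoved : {j ∈ γι | psiS βι γι j ≠ j} = {z ∈ Z | ι z < z} := by
    ext j
    simp only [mem_filter, mem_union]
    constructor
    · rintro ⟨hD | hP, hne⟩
      · exact absurd (psiS_eq_self_of_mem hinv hdisj hnest hD) hne
      · exact hP
    · rintro ⟨hjZ, hjlt⟩
      rw [psiS_eq_of_lt hinv hdisj hnest hjZ hjlt]
      exact ⟨.inr ⟨hjZ, hjlt⟩, hjlt.ne⟩
  rw [pairsS, hmoved]
  exact image_congr fun z hz => by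
    rw [psiS_eq_of_lt hinv hdisj hnest (mem_filter.1 hz).1 (mem_filter.1 hz).2]

end PairsOfInvolution

theorem statement8_general (n k r : ℕ)
    (D Z : Finset ℤ) (ι : ℤ → ℤ)
    (hD : D ⊆ Finset.Icc 1 ((n : ℤ) + 1)) (hZ : Z ⊆ Finset.Icc 1 ((n : ℤ) + 1))
    (hdisj : Disjoint D Z) (hcard : 2 * D.card + Z.card = 2 * k + r)
    (hadm : IsAdmissible r Z ι) :
    (D ∪ Z.filter fun z => z ≤ ι z).card = k + r ∧
    (D ∪ Z.filter fun z => ι z < z).card = k ∧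
    IsSymbol n k r (D ∪ Z.filter fun z => z ≤ ι z) (D ∪ Z.filter fun z => ι z < z) ∧
    IsStandard (D ∪ Z.filter fun z => z ≤ ι z) (D ∪ Z.filter fun z => ι z < z) ∧
    pairsS (D ∪ Z.filter fun z => z ≤ ι z) (D ∪ Z.filter fun z => ι z < z) =
      (Z.filter fun z => ι z < z).image fun z => (z, ι z) := by
  have hinv := hadm.isInvolutionOn
  have hsplit : #{z ∈ Z | ι z < z} + #{z ∈ Z | z ≤ ι z} = #Z := by
    simpa only [not_lt] using card_filter_add_card_filter_not (s := Z) fun z => ι z < z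
  have hle : #{z ∈ Z | z ≤ ι z} = r + #{z ∈ Z | ι z < z} := by
    rw [hinv.card_filter_le, hadm.card_filter_fixed]
  have hβ : #(D ∪ {z ∈ Z | z ≤ ι z}) = k + r := by
    rw [card_union_of_disjoint (hdisj.mono_right (filter_subset _ _))]
    omega
  have hγ : #(D ∪ {z ∈ Z | ι z < z}) = k := by
    rw [card_union_of_disjoint (hdisj.mono_right (filter_subset _ _))]
    omega
  have hrows : ∀ (p : ℤ → Prop) (_ : DecidablePred p),
      D ∪ {z ∈ Z | p z} ⊆ Icc 1 ((n : ℤ) + 1) :=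
    fun p _ => union_subset hD ((filter_subset _ _).trans hZ)
  exact ⟨hβ, hγ, ⟨hrows _ _, hrows _ _, hβ, hγ⟩, isStandard_rows hinv hdisj,
    pairsS_eq_arcs hinv hdisj hadm.isNested⟩

/-- Lemma 4.1 (b): given disjoint `D, Z ⊆ {1,…,n+1}` with
`2|D| + |Z| = 2k + r` and an `r`-admissible involution `ι` of `Z`, the symbol with
`β = D ∪ {z : ι z ≥ z}` and `γ = D ∪ {z' : ι z' < z'}` has rows of cardinalities
`k+r` and `k`, lies in `Sy(n,k,r)`, is standard, and its pairs are exactly the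
nontrivial orbits `(z', ι z')` (with `ι z' < z'`) of `ι`. -/
theorem statement8 (n k r : ℕ) (hn : 2 ≤ n) (hk : 1 ≤ k) (hkr : k + r ≤ n)
    (D Z : Finset ℤ) (ι : ℤ → ℤ)
    (hD : D ⊆ Finset.Icc 1 ((n : ℤ) + 1)) (hZ : Z ⊆ Finset.Icc 1 ((n : ℤ) + 1))
    (hdisj : Disjoint D Z) (hcard : 2 * D.card + Z.card = 2 * k + r)
    (hadm : IsAdmissible r Z ι) :
    (D ∪ Z.filter fun z => z ≤ ι z).card = k + r ∧
    (D ∪ Z.filter fun z => ι z < z).card = k ∧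
    IsSymbol n k r (D ∪ Z.filter fun z => z ≤ ι z) (D ∪ Z.filter fun z => ι z < z) ∧
    IsStandard (D ∪ Z.filter fun z => z ≤ ι z) (D ∪ Z.filter fun z => ι z < z) ∧
    pairsS (D ∪ Z.filter fun z => z ≤ ι z) (D ∪ Z.filter fun z => ι z < z) =
      (Z.filter fun z => ι z < z).image fun z => (z, ι z) :=
  statement8_general n k r D Z ι hD hZ hdisj hcard hadm

end LM2003
end

section
/- Let S = (β, γ) ∈ Sy(n,k,r) with k ≥ 2, let z ∈ β and z′ ∈ γ, and suppose that either z = z′, or z < z′ with z ∉ γ, z′ ∉ β, and z, z′ consecutive in Z(S) (no element of Z(S) lies strictly between z and z′). Then S is standard if and only if the symbol S′ = (β ∖ {z}, γ ∖ {z′}) ∈ Sy(n, k−1, r) is standard. -/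
namespace LM2003

open scoped BigOperators

/-!
For `|γ| ≤ |β|`, standardness of `(β, γ)` says that for every `t` the row `β` has at least as many
entries `≤ t` as `γ`. Removing `z` from `β` and `z' ≥ z` from `γ` lowers this surplus by one
exactly for `z ≤ t < z'`. On that window `z ∉ γ` and the absence of elements of `Z(S)` strictly
between `z` and `z'` give `β ∩ [z, t] = {z} ∪ (γ ∩ [z, t])`, so the surplus at `t` exceeds the
one at `z - 1` by one and stays positive.
-/

open Finset

theorem orderEmbOfFin_le_iff {α : Type*} [LinearOrder α] (s : Finset α) (i : Fin #s) (t : α) :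
    s.orderEmbOfFin rfl i ≤ t ↔ (i : ℕ) < #{x ∈ s | x ≤ t} := by
  set f := s.orderEmbOfFin rfl
  constructor
  · intro hi
    have hsub : (Iic i).map f.toEmbedding ⊆ {x ∈ s | x ≤ t} := by
      simp only [subset_iff, mem_map, mem_Iic, mem_filter]
      rintro _ ⟨j, hj, rfl⟩
      exact ⟨s.orderEmbOfFin_mem rfl j, (f.monotone hj).trans hi⟩
    simpa using card_le_card hsub
  · intro hi
    by_contra! hlt
    have hsub : {x ∈ s | x ≤ t} ⊆ (Iio i).map f.toEmbedding := by
      intro x hx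
      rw [mem_filter] at hx
      obtain ⟨j, rfl⟩ : x ∈ Set.range f := by simpa [f] using hx.1
      simpa using f.lt_iff_lt.mp (hx.2.trans_lt hlt)
    simpa using (card_le_card hsub).trans_lt' hi

theorem card_filter_erase_add {α : Type*} [DecidableEq α] (p : α → Prop) [DecidablePred p]
    {s : Finset α} {a : α} (ha : a ∈ s) :
    #{x ∈ s.erase a | p x} + (if p a then 1 else 0) = #{x ∈ s | p x} := by
  rw [filter_erase]
  split_ifs with hp
  · exact card_erase_add_one (mem_filter.mpr ⟨ha, hp⟩)
  · rw [erase_eq_of_notMem (fun h => hp (mem_filter.mp h).2), add_zero]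

theorem card_filter_le_eq_add (s : Finset ℤ) {a t : ℤ} (h : a ≤ t) :
    #{x ∈ s | x ≤ t} = #{x ∈ s | x ≤ a - 1} + #{x ∈ s | a ≤ x ∧ x ≤ t} := by
  rw [← card_filter_add_card_filter_not (s := {x ∈ s | x ≤ t}) (fun x => x ≤ a - 1),
    filter_filter, filter_filter]
  congr 2 <;> ext x <;> simp only [mem_filter] <;> grind

theorem isStandard_iff_forall_card_filter_le {β γ : Finset ℤ} (hcard : #γ ≤ #β) :
    IsStandard β γ ↔ ∀ t : ℤ, #{x ∈ γ | x ≤ t} ≤ #{x ∈ β | x ≤ t} := by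
  have hsort (s : Finset ℤ) (i : ℕ) (hi : i < #s) (t : ℤ) :
      (s.sort (· ≤ ·))[i]! ≤ t ↔ i < #{x ∈ s | x ≤ t} := by
    rw [getElem!_pos _ i (by simpa using hi)]
    exact orderEmbOfFin_le_iff s ⟨i, hi⟩ t
  constructor
  · intro hst t
    obtain h0 | hpos := Nat.eq_zero_or_pos #{x ∈ γ | x ≤ t}
    · omega
    · have hi : #{x ∈ γ | x ≤ t} - 1 < #γ := by
        have := card_filter_le γ (· ≤ t)
        omega
      have hγ := (hsort γ _ hi t).mpr (by omega)
      have hβ := (hsort β _ (hi.trans_le hcard) t).mp ((hst _ hi).trans hγ)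
      omega
  · intro h i hi
    exact (hsort β i (hi.trans_le hcard) _).mpr
      (((hsort γ i hi _).mp le_rfl).trans_le (h _))

theorem filter_Icc_eq_insert_of_gap {β γ : Finset ℤ} {z z' t : ℤ} (hzβ : z ∈ β) (hzγ : z ∉ γ)
    (hgap : ∀ x, z < x → x < z' → (x ∈ β ↔ x ∈ γ)) (hzt : z ≤ t) (ht : t < z') :
    {x ∈ β | z ≤ x ∧ x ≤ t} = insert z {x ∈ γ | z ≤ x ∧ x ≤ t} := by
  ext x
  simp only [mem_filter, mem_insert]
  rcases eq_or_ne x z with rfl | hxz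
  · simp [hzβ, hzt]
  · constructor
    · rintro ⟨hx, hzx, hxt⟩
      exact Or.inr ⟨(hgap x (lt_of_le_of_ne hzx hxz.symm) (hxt.trans_lt ht)).mp hx, hzx, hxt⟩
    · rintro (rfl | ⟨hx, hzx, hxt⟩)
      · exact absurd rfl hxz
      · exact ⟨(hgap x (lt_of_le_of_ne hzx hxz.symm) (hxt.trans_lt ht)).mpr hx, hzx, hxt⟩

theorem card_filter_le_lt_of_gap {β γ : Finset ℤ} {z z' t : ℤ} (hzβ : z ∈ β) (hzγ : z ∉ γ)
    (hgap : ∀ x, z < x → x < z' → (x ∈ β ↔ x ∈ γ))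
    (hbefore : #{x ∈ γ | x ≤ z - 1} ≤ #{x ∈ β | x ≤ z - 1}) (hzt : z ≤ t) (ht : t < z') :
    #{x ∈ γ | x ≤ t} < #{x ∈ β | x ≤ t} := by
  rw [card_filter_le_eq_add γ hzt, card_filter_le_eq_add β hzt,
    filter_Icc_eq_insert_of_gap hzβ hzγ hgap hzt ht, card_insert_of_notMem (by simp [hzγ])]
  omega

theorem forall_card_filter_le_erase_iff {β γ : Finset ℤ} {z z' : ℤ} (hz : z ∈ β) (hz' : z' ∈ γ)
    (hzz' : z ≤ z') (hcase : z = z' ∨ z ∉ γ ∧ ∀ x, z < x → x < z' → (x ∈ β ↔ x ∈ γ)) :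
    (∀ t, #{x ∈ γ | x ≤ t} ≤ #{x ∈ β | x ≤ t}) ↔
      ∀ t, #{x ∈ γ.erase z' | x ≤ t} ≤ #{x ∈ β.erase z | x ≤ t} := by
  refine ⟨fun h t => ?_, fun h t => ?_⟩ <;>
    have hβt := card_filter_erase_add (· ≤ t) hz <;>
    have hγt := card_filter_erase_add (· ≤ t) hz' <;>
    have ht := h t
  · by_cases hmid : z ≤ t ∧ t < z'
    · obtain rfl | ⟨hzγ, hgap⟩ := hcase
      · omega
      have := card_filter_le_lt_of_gap hz hzγ hgap (h (z - 1)) hmid.1 hmid.2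
      simp only [if_pos hmid.1, if_neg (not_le.mpr hmid.2)] at hβt hγt
      omega
    · split_ifs at hβt hγt <;> omega
  · split_ifs at hβt hγt <;> omega

theorem statement10_general (n k r : ℕ)
    (β γ : Finset ℤ) (hS : IsSymbol n k r β γ)
    (z z' : ℤ) (hz : z ∈ β) (hz' : z' ∈ γ)
    (hcase : z = z' ∨
      (z < z' ∧ z ∉ γ ∧ z' ∉ β ∧
        ∀ x ∈ (β ∪ γ) \ (β ∩ γ), ¬(z < x ∧ x < z'))) :
    IsSymbol n (k - 1) r (β.erase z) (γ.erase z') ∧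
    (IsStandard β γ ↔ IsStandard (β.erase z) (γ.erase z')) := by
  obtain ⟨hβsub, hγsub, hβcard, hγcard⟩ := hS
  have hk : 1 ≤ k := hγcard ▸ card_pos.mpr ⟨z', hz'⟩
  have hβe : #(β.erase z) = k - 1 + r := by rw [card_erase_of_mem hz]; omega
  have hγe : #(γ.erase z') = k - 1 := by rw [card_erase_of_mem hz', hγcard]
  refine ⟨⟨(erase_subset z β).trans hβsub, (erase_subset z' γ).trans hγsub, hβe, hγe⟩, ?_⟩
  rw [isStandard_iff_forall_card_filter_le (by omega),
    isStandard_iff_forall_card_filter_le (by omega)]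
  refine forall_card_filter_le_erase_iff hz hz' (hcase.elim le_of_eq fun h => h.1.le) ?_
  obtain rfl | ⟨-, hzγ, -, hgap⟩ := hcase
  · exact Or.inl rfl
  refine Or.inr ⟨hzγ, fun x hzx hxz' => ?_⟩
  by_contra hx
  exact hgap x (by simp only [mem_sdiff, mem_union, mem_inter]; tauto) ⟨hzx, hxz'⟩

/-- remark (R): if `z ∈ β`, `z' ∈ γ` and either `z = z'`, or `z < z'`
with `z ∉ γ`, `z' ∉ β` and `z, z'` consecutive in `Z(S)`, then `S' = (β∖{z}, γ∖{z'})`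
is a symbol in `Sy(n,k-1,r)` and `S` is standard iff `S'` is standard. -/
theorem statement10 (n k r : ℕ) (hn : 2 ≤ n) (hk : 2 ≤ k) (hkr : k + r ≤ n)
    (β γ : Finset ℤ) (hS : IsSymbol n k r β γ)
    (z z' : ℤ) (hz : z ∈ β) (hz' : z' ∈ γ)
    (hcase : z = z' ∨
      (z < z' ∧ z ∉ γ ∧ z' ∉ β ∧
        ∀ x ∈ (β ∪ γ) \ (β ∩ γ), ¬(z < x ∧ x < z'))) :
    IsSymbol n (k - 1) r (β.erase z) (γ.erase z') ∧
    (IsStandard β γ ↔ IsStandard (β.erase z) (γ.erase z')) :=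
  statement10_general n k r β γ hS z z' hz hz' hcase

end LM2003
end

section
/- Let S = (β, γ) be a standard symbol having at least one pair, and let l ≥ 1 be minimal with γ^l ≠ ∅ (where the γ^l are the sets occurring in the definition of ψ). Then for every z′ ∈ γ^l, setting z = ψ(z′) = z′ − l, the elements z and z′ both lie in Z(S) and are consecutive in Z(S): no element of Z(S) lies strictly between z and z′. -/
namespace LM2003

open scoped BigOperators

/-- for a standard symbol with at least one pair, if `l ≥ 1` is minimal
with `γ^l ≠ ∅`, then for every `z' ∈ γ^l`, setting `z = ψ(z') = z' - l`, the elements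
`z` and `z'` lie in `Z(S)` and are consecutive there. -/
theorem statement11 (n k r : ℕ) (hn : 2 ≤ n) (hk : 1 ≤ k) (hkr : k + r ≤ n)
    (β γ : Finset ℤ) (hS : IsSymbol n k r β γ) (hstd : IsStandard β γ)
    (hpairs : (pairsS β γ).Nonempty)
    (l : ℕ) (hl1 : 1 ≤ l) (hlne : (gammaL β γ l).Nonempty)
    (hlmin : ∀ m : ℕ, 1 ≤ m → (gammaL β γ m).Nonempty → l ≤ m) :
    ∀ z' ∈ gammaL β γ l,
      psiS β γ z' = z' - (l : ℤ) ∧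
      z' - (l : ℤ) ∈ (β ∪ γ) \ (β ∩ γ) ∧
      z' ∈ (β ∪ γ) \ (β ∩ γ) ∧
      ∀ x ∈ (β ∪ γ) \ (β ∩ γ), ¬(z' - (l : ℤ) < x ∧ x < z') := by
  have psiAcc_succ : ∀ m : ℕ, psiAcc β γ (m + 1) =
      ((psiAcc β γ m).1 ∪ gammaL β γ (m + 1),
       (psiAcc β γ m).2 ∪ (gammaL β γ (m + 1)).image fun j => j - ((m : ℤ) + 1)) :=
    fun m => rfl
  have hempty : ∀ m, 1 ≤ m → m < l → gammaL β γ m = ∅ := by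
    intro m h1 hm
    by_contra h
    exact absurd (hlmin m h1 (Finset.nonempty_iff_ne_empty.mpr h)) (not_le.mpr hm)
  have hacc : ∀ m, m < l → psiAcc β γ m = (γ ∩ β, γ ∩ β) := by
    intro m
    induction m with
    | zero => intro _; rfl
    | succ m ih =>
      intro hm
      have h1 := ih (Nat.lt_of_succ_lt hm)
      have hg : gammaL β γ (m + 1) = ∅ := hempty (m + 1) (Nat.le_add_left 1 m) hm
      rw [psiAcc_succ, hg, h1]
      simp
  obtain ⟨lm, rfl⟩ : ∃ lm, l = lm + 1 := ⟨l - 1, (Nat.succ_pred_eq_of_pos hl1).symm⟩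
  have haccl : psiAcc β γ lm = (γ ∩ β, γ ∩ β) := hacc lm (Nat.lt_succ_self lm)
  intro z' hz'
  have hz'' := hz'
  rw [show gammaL β γ (lm + 1) = (γ \ (psiAcc β γ lm).1).filter
        (fun j => j - ((lm : ℤ) + 1) ∈ β \ (psiAcc β γ lm).2) from rfl,
      haccl, Finset.mem_filter, Finset.mem_sdiff, Finset.mem_sdiff] at hz''
  obtain ⟨⟨hz'γ, hz'nγβ⟩, hzβ, hznγβ⟩ := hz''
  have hz'nβ : z' ∉ β := fun h => hz'nγβ (Finset.mem_inter.mpr ⟨hz'γ, h⟩)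
  have hcast : z' - ((lm : ℤ) + 1) = z' - ((lm + 1 : ℕ) : ℤ) := by push_cast; ring
  rw [hcast] at hzβ hznγβ
  set z := z' - ((lm + 1 : ℕ) : ℤ) with hzdef
  have hznγ : z ∉ γ := fun h => hznγβ (Finset.mem_inter.mpr ⟨h, hzβ⟩)
  have hzlt : z < z' := by
    have : (0 : ℤ) < ((lm + 1 : ℕ) : ℤ) := by positivity
    omega
  refine ⟨?_, ?_, ?_, ?_⟩
  · -- psiS value
    have hex : ∃ m, z' ∈ gammaL β γ m := ⟨lm + 1, hz'⟩
    have hfind : Nat.find hex = lm + 1 := by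
      rw [Nat.find_eq_iff]
      refine ⟨hz', fun m hm hmem => ?_⟩
      rcases Nat.eq_zero_or_pos m with h0 | h1
      · subst h0
        exact hz'nβ (Finset.mem_inter.mp hmem).2
      · rw [hempty m h1 hm] at hmem
        exact absurd hmem (Finset.notMem_empty z')
    rw [psiS, dif_pos hex, hfind]
  · -- z ∈ Z(S)
    rw [Finset.mem_sdiff, Finset.mem_union, Finset.mem_inter]
    exact ⟨Or.inl hzβ, fun h => hznγ h.2⟩
  · -- z' ∈ Z(S)
    rw [Finset.mem_sdiff, Finset.mem_union, Finset.mem_inter]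
    exact ⟨Or.inr hz'γ, fun h => hz'nβ h.1⟩
  · -- consecutiveness
    intro x hx ⟨hx1, hx2⟩
    rw [Finset.mem_sdiff, Finset.mem_union, Finset.mem_inter] at hx
    obtain ⟨hxβγ, hxnot⟩ := hx
    -- x = z' - m with 1 ≤ m ≤ lm
    obtain ⟨m, hm1, hmlt, hxm⟩ : ∃ m : ℕ, 1 ≤ m ∧ m < lm + 1 ∧ x = z' - (m : ℤ) := by
      refine ⟨(z' - x).toNat, ?_, ?_, ?_⟩ <;> omega
    rcases hxβγ with hxβ | hxγ
    · -- x ∈ β, x ∉ γ : then z' ∈ gammaL m, contradiction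
      have hxnγ : x ∉ γ := fun h => hxnot ⟨hxβ, h⟩
      obtain ⟨mm, rfl⟩ : ∃ mm, m = mm + 1 := ⟨m - 1, (Nat.succ_pred_eq_of_pos hm1).symm⟩
      have haccm : psiAcc β γ mm = (γ ∩ β, γ ∩ β) :=
        hacc mm (by omega)
      have hz'mem : z' ∈ gammaL β γ (mm + 1) := by
        rw [show gammaL β γ (mm + 1) = (γ \ (psiAcc β γ mm).1).filter
              (fun j => j - ((mm : ℤ) + 1) ∈ β \ (psiAcc β γ mm).2) from rfl,
            haccm, Finset.mem_filter, Finset.mem_sdiff, Finset.mem_sdiff]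
        have hxc : z' - ((mm : ℤ) + 1) = x := by push_cast at hxm ⊢; omega
        rw [hxc]
        exact ⟨⟨hz'γ, hz'nγβ⟩, hxβ, fun h => hxnγ (Finset.mem_inter.mp h).1⟩
      rw [hempty (mm + 1) (Nat.le_add_left 1 mm) hmlt] at hz'mem
      exact absurd hz'mem (Finset.notMem_empty z')
    · -- x ∈ γ, x ∉ β : then x ∈ gammaL (l - m), contradiction
      have hxnβ : x ∉ β := fun h => hxnot ⟨h, hxγ⟩
      obtain ⟨mm, hmm⟩ : ∃ mm : ℕ, lm + 1 - m = mm + 1 := ⟨lm - m, by omega⟩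
      have haccm : psiAcc β γ mm = (γ ∩ β, γ ∩ β) := hacc mm (by omega)
      have hxmem : x ∈ gammaL β γ (mm + 1) := by
        rw [show gammaL β γ (mm + 1) = (γ \ (psiAcc β γ mm).1).filter
              (fun j => j - ((mm : ℤ) + 1) ∈ β \ (psiAcc β γ mm).2) from rfl,
            haccm, Finset.mem_filter, Finset.mem_sdiff, Finset.mem_sdiff]
        have hxc : x - ((mm : ℤ) + 1) = z := by
          rw [hzdef]; push_cast at hxm ⊢; omega
        rw [hxc]
        exact ⟨⟨hxγ, fun h => hxnβ (Finset.mem_inter.mp h).2⟩, hzβ,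
          fun h => hznγ (Finset.mem_inter.mp h).1⟩
      rw [hempty (mm + 1) (Nat.le_add_left 1 mm) (by omega)] at hxmem
      exact absurd hxmem (Finset.notMem_empty x)

end LM2003
end
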